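/- For any L ≥ 1, κ > 0, ν > 0, the tail sum ∑_{l=L+1}^∞ (2l+1)(κ² + l(l+1))^{-(ν+1)} is bounded above by (1/ν + 1/(L(2ν+1))) · L^{-2ν}. -/
import Mathlib

open Set MeasureTheory

/-- Partial-sum-vs-integral bound: `∑_{i<n} (L+1+i)^s ≤ -L^{s+1}/(s+1)` for `s < -1`. -/
lemma aux_partial_sum_rpow_le (L : ℕ) (hL : 1 ≤ L) (s : ℝ) (hs : s < -1) (n : ℕ) :
    ∑ i ∈ Finset.range n, ((L : ℝ) + 1 + i) ^ s ≤ -(L : ℝ) ^ (s + 1) / (s + 1) := by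
  have hLpos : (0 : ℝ) < L := by exact_mod_cast Nat.lt_of_lt_of_le Nat.zero_lt_one hL
  have hanti : AntitoneOn (fun t : ℝ => t ^ s) (Icc (L : ℝ) ((L : ℝ) + n)) := by
    intro x hx y hy hxy
    exact Real.rpow_le_rpow_of_nonpos (lt_of_lt_of_le hLpos hx.1) hxy (by linarith)
  have h1 : ∑ i ∈ Finset.range n, ((L : ℝ) + 1 + i) ^ s =
      ∑ i ∈ Finset.range n, (fun t : ℝ => t ^ s) ((L : ℝ) + ((i + 1 : ℕ) : ℝ)) := by
    apply Finset.sum_congr rfl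
    intro i _
    push_cast
    ring_nf
  have h2 := hanti.sum_le_integral
  rw [h1]
  refine le_trans h2 ?_
  have hint : IntegrableOn (fun t : ℝ => t ^ s) (Ioi (L : ℝ)) :=
    integrableOn_Ioi_rpow_of_lt hs hLpos
  have h3 : ∫ x in (L : ℝ)..(L : ℝ) + n, x ^ s ≤ ∫ x in Ioi (L : ℝ), x ^ s := by
    rw [intervalIntegral.integral_of_le (le_add_of_nonneg_right (Nat.cast_nonneg n))]
    apply setIntegral_mono_set hint
    · filter_upwards [ae_restrict_mem measurableSet_Ioi] with x hx
      exact Real.rpow_nonneg (le_of_lt (lt_trans hLpos hx)) s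
    · exact Filter.Eventually.of_forall fun x hx => hx.1
  refine le_trans h3 ?_
  rw [integral_Ioi_rpow_of_lt hs hLpos]

/-- Summability of the shifted power series. -/
lemma aux_summable_rpow (L : ℕ) (hL : 1 ≤ L) (s : ℝ) (hs : s < -1) :
    Summable (fun l : ℕ => ((L : ℝ) + 1 + l) ^ s) := by
  have hLpos : (0 : ℝ) < L := by exact_mod_cast Nat.lt_of_lt_of_le Nat.zero_lt_one hL
  apply summable_of_sum_range_le (c := -(L : ℝ) ^ (s + 1) / (s + 1))
  · intro l
    have : (0 : ℝ) < (L : ℝ) + 1 + l := by positivity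
    positivity
  · exact aux_partial_sum_rpow_le L hL s hs

/-- Tail sum bound via integral comparison. -/
lemma aux_tsum_rpow_le (L : ℕ) (hL : 1 ≤ L) (s : ℝ) (hs : s < -1) :
    ∑' l : ℕ, ((L : ℝ) + 1 + l) ^ s ≤ -(L : ℝ) ^ (s + 1) / (s + 1) := by
  apply Real.tsum_le_of_sum_range_le
  · intro l
    have : (0 : ℝ) < (L : ℝ) + 1 + l := by positivity
    positivity
  · exact aux_partial_sum_rpow_le L hL s hs

/-- Tail bound for the angular power spectrum series of a Matérn-type field on the sphere:
for `L ≥ 1`, `κ > 0`, `ν > 0`,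
`∑_{l=L+1}^∞ (2l+1)(κ² + l(l+1))^{-(ν+1)} ≤ (1/ν + 1/(L(2ν+1))) L^{-2ν}`. -/
theorem tail_sum_bound (L : ℕ) (hL : 1 ≤ L) (κ ν : ℝ) (hκ : 0 < κ) (hν : 0 < ν) :
    ∑' l : ℕ,
        (2 * ((L : ℝ) + 1 + l) + 1) *
          (κ ^ 2 + ((L : ℝ) + 1 + l) * (((L : ℝ) + 1 + l) + 1)) ^ (-(ν + 1)) ≤
      (1 / ν + 1 / (L * (2 * ν + 1))) * (L : ℝ) ^ (-(2 * ν)) := by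
  have hLpos : (0 : ℝ) < L := by exact_mod_cast Nat.lt_of_lt_of_le Nat.zero_lt_one hL
  set g : ℕ → ℝ := fun l =>
    2 * ((L : ℝ) + 1 + l) ^ (-(2 * ν + 1)) + ((L : ℝ) + 1 + l) ^ (-(2 * ν + 2)) with hg
  have hs1 : -(2 * ν + 1) < -1 := by linarith
  have hs2 : -(2 * ν + 2) < -1 := by linarith
  have hsum1 := aux_summable_rpow L hL _ hs1
  have hsum2 := aux_summable_rpow L hL _ hs2
  have hsumg : Summable g := (hsum1.mul_left 2).add hsum2
  have hle : ∀ l : ℕ,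
      (2 * ((L : ℝ) + 1 + l) + 1) *
          (κ ^ 2 + ((L : ℝ) + 1 + l) * (((L : ℝ) + 1 + l) + 1)) ^ (-(ν + 1)) ≤ g l := by
    intro l
    set x : ℝ := (L : ℝ) + 1 + l with hx
    have hx2 : (2 : ℝ) ≤ x := by
      have : (1 : ℝ) ≤ (L : ℝ) := by exact_mod_cast hL
      have : (0 : ℝ) ≤ (l : ℕ) := Nat.cast_nonneg l
      have h1 : (1 : ℝ) ≤ (L : ℝ) := by exact_mod_cast hL
      have h2 : (0 : ℝ) ≤ (l : ℝ) := Nat.cast_nonneg l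
      rw [hx]; linarith
    have hx0 : (0 : ℝ) < x := by linarith
    have hbase : x ^ 2 ≤ κ ^ 2 + x * (x + 1) := by nlinarith
    have h1 : (κ ^ 2 + x * (x + 1)) ^ (-(ν + 1)) ≤ (x ^ 2) ^ (-(ν + 1)) :=
      Real.rpow_le_rpow_of_nonpos (by positivity) hbase (by linarith)
    have h2 : (x ^ 2 : ℝ) ^ (-(ν + 1)) = x ^ (-(2 * ν + 2)) := by
      rw [← Real.rpow_natCast x 2, ← Real.rpow_mul hx0.le]
      norm_num
      ring_nf
    have h3 : (2 * x + 1) * (κ ^ 2 + x * (x + 1)) ^ (-(ν + 1)) ≤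
        (2 * x + 1) * x ^ (-(2 * ν + 2)) := by
      rw [← h2]
      exact mul_le_mul_of_nonneg_left h1 (by linarith)
    refine le_trans h3 (le_of_eq ?_)
    have h4 : x * x ^ (-(2 * ν + 2)) = x ^ (-(2 * ν + 1)) := by
      nth_rewrite 1 [← Real.rpow_one x]
      rw [← Real.rpow_add hx0]
      congr 1; ring
    show (2 * x + 1) * x ^ (-(2 * ν + 2)) =
      2 * x ^ (-(2 * ν + 1)) + x ^ (-(2 * ν + 2))
    rw [← h4]
    ring
  have hsumf : Summable (fun l : ℕ =>
      (2 * ((L : ℝ) + 1 + l) + 1) *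
        (κ ^ 2 + ((L : ℝ) + 1 + l) * (((L : ℝ) + 1 + l) + 1)) ^ (-(ν + 1))) := by
    apply Summable.of_nonneg_of_le _ hle hsumg
    intro l
    have h1 : (0 : ℝ) < (L : ℝ) + 1 + l := by positivity
    have h2 : (0 : ℝ) < κ ^ 2 + ((L : ℝ) + 1 + l) * (((L : ℝ) + 1 + l) + 1) := by positivity
    positivity
  calc ∑' l : ℕ,
        (2 * ((L : ℝ) + 1 + l) + 1) *
          (κ ^ 2 + ((L : ℝ) + 1 + l) * (((L : ℝ) + 1 + l) + 1)) ^ (-(ν + 1))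
      ≤ ∑' l : ℕ, g l := Summable.tsum_le_tsum hle hsumf hsumg
    _ = 2 * (∑' l : ℕ, ((L : ℝ) + 1 + l) ^ (-(2 * ν + 1))) +
        ∑' l : ℕ, ((L : ℝ) + 1 + l) ^ (-(2 * ν + 2)) := by
        rw [hg, Summable.tsum_add (hsum1.mul_left 2) hsum2, tsum_mul_left]
    _ ≤ 2 * (-(L : ℝ) ^ (-(2 * ν + 1) + 1) / (-(2 * ν + 1) + 1)) +
        (-(L : ℝ) ^ (-(2 * ν + 2) + 1) / (-(2 * ν + 2) + 1)) := by
        have b1 := aux_tsum_rpow_le L hL _ hs1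
        have b2 := aux_tsum_rpow_le L hL _ hs2
        have t1 : (0:ℝ) ≤ ∑' l : ℕ, ((L : ℝ) + 1 + l) ^ (-(2 * ν + 1)) := by
          apply tsum_nonneg; intro l
          have : (0 : ℝ) < (L : ℝ) + 1 + l := by positivity
          positivity
        nlinarith [b1, b2]
    _ = (1 / ν + 1 / (L * (2 * ν + 1))) * (L : ℝ) ^ (-(2 * ν)) := by
        have e1 : -(2 * ν + 1) + 1 = -(2 * ν) := by ring
        have e2 : -(2 * ν + 2) + 1 = -(2 * ν) + (-1) := by ring
        have hνne : (ν : ℝ) ≠ 0 := hν.ne'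
        have h2ν1 : (2 * ν + 1 : ℝ) ≠ 0 := by positivity
        have hLne : (L : ℝ) ≠ 0 := hLpos.ne'
        have h3 : (-(2 * ν) + -1 : ℝ) ≠ 0 := by intro h; apply h2ν1; linarith
        rw [e1, e2, Real.rpow_add hLpos, Real.rpow_neg_one]
        field_simp [h3]
        ring
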